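/- Let α : [0,∞) → ℝ be differentiable with α(x) ≥ 0, α(0) = α₀ ≥ 0, and suppose |α'(x)| ≤ f(x)·√(α(x)) for a continuous nonnegative function f. Then for all x ≥ 0, √(α(x)) ≤ √(α₀) + (1/2)∫₀ˣ f(y) dy. -/
import Mathlib


/-- Grönwall-type lemma for square-root differential inequalities:
if `α ≥ 0` on `[0,∞)`, `|α'| ≤ f ⬝ √α` with `f` continuous and nonnegative, then
`√(α x) ≤ √(α 0) + (1/2) ∫₀ˣ f`. -/
theorem sqrt_gronwall (α α' f : ℝ → ℝ)
    (hα_nonneg : ∀ x, 0 ≤ x → 0 ≤ α x)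
    (hα_deriv : ∀ x, 0 ≤ x → HasDerivAt α (α' x) x)
    (hf_cont : Continuous f) (hf_nonneg : ∀ y, 0 ≤ f y)
    (hineq : ∀ x, 0 ≤ x → |α' x| ≤ f x * Real.sqrt (α x)) :
    ∀ x, 0 ≤ x →
      Real.sqrt (α x) ≤ Real.sqrt (α 0) + (1 / 2) * ∫ y in (0 : ℝ)..x, f y := by
  intro x hx
  have hint : ∀ t : ℝ, HasDerivAt (fun u => ∫ y in (0:ℝ)..u, f y) (f t) t := fun t =>
    intervalIntegral.integral_hasDerivAt_right (hf_cont.intervalIntegrable 0 t)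
      hf_cont.aestronglyMeasurable.stronglyMeasurableAtFilter hf_cont.continuousAt
  have key : ∀ ε : ℝ, 0 < ε → Real.sqrt (α x) ≤ Real.sqrt (α 0 + ε)
      + (1 / 2) * ∫ y in (0:ℝ)..x, f y := by
    intro ε hε
    set φ : ℝ → ℝ := fun t => Real.sqrt (α t + ε) - (1/2) * ∫ y in (0:ℝ)..t, f y with hφ
    have hd : ∀ t, 0 ≤ t →
        HasDerivAt φ ((1/(2 * Real.sqrt (α t + ε))) * α' t - (1/2) * f t) t := by
      intro t ht
      have hpos : 0 < α t + ε := by linarith [hα_nonneg t ht]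
      have h1 : HasDerivAt (fun y => Real.sqrt (α y + ε))
          ((1/(2 * Real.sqrt (α t + ε))) * α' t) t :=
        (Real.hasDerivAt_sqrt hpos.ne').comp t ((hα_deriv t ht).add_const ε)
      exact h1.sub ((hint t).const_mul (1/2))
    have hderiv_nonpos : ∀ t, 0 ≤ t →
        (1/(2 * Real.sqrt (α t + ε))) * α' t - (1/2) * f t ≤ 0 := by
      intro t ht
      have hpos : 0 < α t + ε := by linarith [hα_nonneg t ht]
      have hs : 0 < Real.sqrt (α t + ε) := Real.sqrt_pos.mpr hpos
      have h1 : α' t ≤ f t * Real.sqrt (α t + ε) := by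
        calc α' t ≤ |α' t| := le_abs_self _
        _ ≤ f t * Real.sqrt (α t) := hineq t ht
        _ ≤ f t * Real.sqrt (α t + ε) := by
            exact mul_le_mul_of_nonneg_left
              (Real.sqrt_le_sqrt (by linarith)) (hf_nonneg t)
      rw [div_mul_eq_mul_div, sub_nonpos, div_le_iff₀ (by positivity)]
      calc 1 * α' t = α' t := one_mul _
      _ ≤ f t * Real.sqrt (α t + ε) := h1
      _ = 1/2 * f t * (2 * Real.sqrt (α t + ε)) := by ring
    have hanti : AntitoneOn φ (Set.Ici (0:ℝ)) := by
      apply antitoneOn_of_deriv_nonpos (convex_Ici 0)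
      · exact fun t ht => ((hd t ht).continuousAt).continuousWithinAt
      · intro t ht
        rw [interior_Ici] at ht
        exact ((hd t (le_of_lt ht)).differentiableAt).differentiableWithinAt
      · intro t ht
        rw [interior_Ici] at ht
        rw [(hd t (le_of_lt ht)).deriv]
        exact hderiv_nonpos t (le_of_lt ht)
    have h0 : φ x ≤ φ 0 := hanti (Set.self_mem_Ici) hx hx
    have hφ0 : φ 0 = Real.sqrt (α 0 + ε) := by
      simp [hφ]
    have hmono : Real.sqrt (α x) ≤ Real.sqrt (α x + ε) :=
      Real.sqrt_le_sqrt (by linarith)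
    have : Real.sqrt (α x + ε) - (1/2) * ∫ y in (0:ℝ)..x, f y ≤ Real.sqrt (α 0 + ε) := by
      rw [← hφ0]; exact h0
    linarith
  refine le_of_forall_pos_le_add ?_
  intro δ hδ
  have h := key (δ^2) (by positivity)
  have hsq : Real.sqrt (α 0 + δ^2) ≤ Real.sqrt (α 0) + δ := by
    rw [show Real.sqrt (α 0) + δ = Real.sqrt (α 0) + Real.sqrt (δ^2) by
      rw [Real.sqrt_sq hδ.le]]
    have h0 : 0 ≤ α 0 := hα_nonneg 0 le_rfl
    have : α 0 + δ^2 ≤ (Real.sqrt (α 0) + Real.sqrt (δ^2))^2 := by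
      have := Real.sq_sqrt h0
      have := Real.sq_sqrt (sq_nonneg δ)
      nlinarith [Real.sqrt_nonneg (α 0), Real.sqrt_nonneg (δ^2)]
    calc Real.sqrt (α 0 + δ^2) ≤ Real.sqrt ((Real.sqrt (α 0) + Real.sqrt (δ^2))^2) :=
          Real.sqrt_le_sqrt this
    _ = Real.sqrt (α 0) + Real.sqrt (δ^2) := Real.sqrt_sq (by positivity)
  linarith
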